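/- arXiv:1611.03705 — 2 statements merged into one kernel-verified Lean document; each statement's English description precedes it below -/
import Mathlib

section
/- For natural numbers n and k, the Catalan number Cₙ is congruent to 0 modulo 2^k if and only if d(α(n)) ≥ k. -/
/-!
Since `(n + 1) Cₙ = binomial(2n, n)`, Kummer's theorem gives
`ν₂(Cₙ) = d(n) + d(n) - d(2n) - ν₂(n + 1) = d(n) - ν₂(n + 1)`.
Writing `n + 1 = 2^v (2 α(n) + 1)`, the binary expansion of `n` is that of `α(n)`
followed by a `0` and `v` ones, so `d(n) = d(α(n)) + v` and `ν₂(Cₙ) = d(α(n))`.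
-/

/-- Binary digit sum: the sum of the digits of `n` in base 2. -/
def binaryDigitSum (n : ℕ) : ℕ := (Nat.digits 2 n).sum

/-- `α(n) = (CF₂(n+1) − 1)/2` where `CF₂(m) = m / 2^{ν₂(m)}` is the odd cofactor. -/
def alphaFn (n : ℕ) : ℕ := ((n + 1) / 2 ^ padicValNat 2 (n + 1) - 1) / 2

theorem binaryDigitSum_two_mul (n : ℕ) : binaryDigitSum (2 * n) = binaryDigitSum n := by
  rcases Nat.eq_zero_or_pos n with rfl | hn
  · rfl
  · simp [binaryDigitSum, Nat.digits_def' one_lt_two (by omega : 0 < 2 * n)]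

theorem binaryDigitSum_two_mul_add_one (n : ℕ) :
    binaryDigitSum (2 * n + 1) = binaryDigitSum n + 1 := by
  rw [binaryDigitSum, add_comm, Nat.digits_add 2 one_lt_two 1 n one_lt_two (.inl one_ne_zero),
    List.sum_cons, add_comm, binaryDigitSum]

theorem binaryDigitSum_two_pow_mul_succ_sub_one (v m : ℕ) :
    binaryDigitSum (2 ^ v * (m + 1) - 1) = binaryDigitSum m + v := by
  induction v with
  | zero => simp
  | succ v ih =>
    have hpos : 0 < 2 ^ v * (m + 1) := by positivity
    have hsplit : 2 ^ (v + 1) * (m + 1) - 1 = 2 * (2 ^ v * (m + 1) - 1) + 1 := by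
      rw [pow_succ, mul_comm _ 2, mul_assoc]
      omega
    rw [hsplit, binaryDigitSum_two_mul_add_one, ih, add_assoc]

theorem succ_eq_two_pow_padicValNat_mul_alphaFn (n : ℕ) :
    n + 1 = 2 ^ padicValNat 2 (n + 1) * (2 * alphaFn n + 1) := by
  have hodd : ¬2 ∣ (n + 1) / 2 ^ padicValNat 2 (n + 1) := by
    simpa [Nat.factorization_def _ Nat.prime_two] using
      Nat.not_dvd_ordCompl Nat.prime_two n.add_one_ne_zero
  have hcofactor : (n + 1) / 2 ^ padicValNat 2 (n + 1) = 2 * alphaFn n + 1 := by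
    unfold alphaFn
    generalize (n + 1) / 2 ^ padicValNat 2 (n + 1) = c at hodd ⊢
    omega
  rw [← hcofactor, Nat.mul_div_cancel' pow_padicValNat_dvd]

theorem binaryDigitSum_eq_binaryDigitSum_alphaFn_add (n : ℕ) :
    binaryDigitSum n = binaryDigitSum (alphaFn n) + padicValNat 2 (n + 1) := by
  have hn : n = 2 ^ padicValNat 2 (n + 1) * (2 * alphaFn n + 1) - 1 := by
    rw [← succ_eq_two_pow_padicValNat_mul_alphaFn, Nat.add_sub_cancel]
  conv_lhs => rw [hn]
  rw [binaryDigitSum_two_pow_mul_succ_sub_one, binaryDigitSum_two_mul]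

theorem padicValNat_two_centralBinom (n : ℕ) :
    padicValNat 2 n.centralBinom = binaryDigitSum n := by
  have kummer := sub_one_mul_padicValNat_choose_eq_sub_sum_digits' (p := 2) (k := n) (n := n)
  rw [← two_mul, ← Nat.centralBinom_eq_two_mul_choose] at kummer
  have hdouble := binaryDigitSum_two_mul n
  unfold binaryDigitSum at hdouble ⊢
  omega

theorem catalan_ne_zero (n : ℕ) : catalan n ≠ 0 :=
  right_ne_zero_of_mul ((succ_mul_catalan_eq_centralBinom n).trans_ne (Nat.centralBinom_ne_zero n))

theorem padicValNat_two_catalan (n : ℕ) :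
    padicValNat 2 (catalan n) = binaryDigitSum (alphaFn n) := by
  have hprod := congrArg (padicValNat 2) (succ_mul_catalan_eq_centralBinom n)
  rw [padicValNat.mul n.add_one_ne_zero (catalan_ne_zero n), padicValNat_two_centralBinom,
    binaryDigitSum_eq_binaryDigitSum_alphaFn_add] at hprod
  omega

/-- `Cₙ ≡ 0 (mod 2^k)` iff `d(α(n)) ≥ k`. -/
theorem catalan_modEq_zero_pow_two_iff (n k : ℕ) :
    catalan n ≡ 0 [MOD 2 ^ k] ↔ k ≤ binaryDigitSum (alphaFn n) := by
  rw [Nat.modEq_zero_iff_dvd, padicValNat_dvd_iff_le (catalan_ne_zero n), padicValNat_two_catalan]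
end

section
/- For natural numbers N and k with k ≥ 1 and N ≥ 1, and r = ⌊log₂ N⌋, the number of natural numbers n < N with d(α(n)) = k is at most binomial(r+1, k+1). -/
theorem binaryDigitSum_eq_length_bitIndices (n : ℕ) :
    binaryDigitSum n = n.bitIndices.length := by
  induction n using Nat.binaryRec' with
  | zero => simp [binaryDigitSum]
  | bit b n hb ih =>
    have hpos : 0 < Nat.bit b n := by
      cases b <;> simp_all [Nat.bit, Nat.pos_iff_ne_zero]
    rw [binaryDigitSum, Nat.digits_def' one_lt_two hpos, List.sum_cons, Nat.bit_div_two,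
      ← binaryDigitSum, ih]
    cases b
    · simp
    · rw [Nat.bitIndices_bit_true]; simp; omega

theorem binaryDigitSum_two_pow_mul (k n : ℕ) :
    binaryDigitSum (2 ^ k * n) = binaryDigitSum n := by
  simp [binaryDigitSum_eq_length_bitIndices]

theorem two_pow_mul_two_mul_alphaFn_add_one (n : ℕ) :
    2 ^ padicValNat 2 (n + 1) * (2 * alphaFn n + 1) = n + 1 := by
  have hodd := Nat.two_dvd_ne_zero.mp (Nat.not_dvd_ordCompl (n := n + 1) Nat.prime_two (by omega))
  rw [Nat.factorization_def _ Nat.prime_two] at hodd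
  have hcofactor : 2 * alphaFn n + 1 = (n + 1) / 2 ^ padicValNat 2 (n + 1) := by
    unfold alphaFn
    generalize (n + 1) / 2 ^ padicValNat 2 (n + 1) = c at hodd ⊢
    omega
  rw [hcofactor]
  exact Nat.ordProj_mul_ordCompl_eq_self (n + 1) 2

theorem binaryDigitSum_succ (n : ℕ) :
    binaryDigitSum (n + 1) = binaryDigitSum (alphaFn n) + 1 := by
  rw [← two_pow_mul_two_mul_alphaFn_add_one, binaryDigitSum_two_pow_mul,
    binaryDigitSum_two_mul_add_one]

theorem ncard_binaryDigitSum_eq_le (b j : ℕ) :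
    {m : ℕ | m < 2 ^ b ∧ binaryDigitSum m = j}.ncard ≤ b.choose j := by
  have hmaps : ∀ m ∈ {m : ℕ | m < 2 ^ b ∧ binaryDigitSum m = j},
      Finset.equivBitIndices m ∈ ((Finset.range b).powersetCard j : Set (Finset ℕ)) := by
    rintro m ⟨hm, rfl⟩
    rw [Finset.mem_coe, Finset.mem_powersetCard, Finset.equivBitIndices_apply,
      List.toFinset_card_of_nodup Nat.bitIndices_nodup, binaryDigitSum_eq_length_bitIndices]
    refine ⟨fun i hi => ?_, rfl⟩
    have hpow := (Nat.two_pow_le_of_mem_bitIndices (List.mem_toFinset.mp hi)).trans_lt hm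
    exact Finset.mem_range.mpr ((Nat.pow_lt_pow_iff_right one_lt_two).mp hpow)
  calc _ ≤ (((Finset.range b).powersetCard j : Finset (Finset ℕ)) : Set (Finset ℕ)).ncard :=
        Set.ncard_le_ncard_of_injOn _ hmaps Finset.equivBitIndices.injective.injOn
    _ = b.choose j := by simp

theorem card_dAlpha_le_general (N k : ℕ)
    (r : ℕ) (hr : r = Nat.log 2 N) :
    {n : ℕ | n < N ∧ binaryDigitSum (alphaFn n) = k}.ncard ≤ (r + 1).choose (k + 1) := by
  have hN : N < 2 ^ (r + 1) := hr ▸ Nat.lt_pow_succ_log_self one_lt_two N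
  have hmaps : ∀ n ∈ {n : ℕ | n < N ∧ binaryDigitSum (alphaFn n) = k},
      n + 1 ∈ {m : ℕ | m < 2 ^ (r + 1) ∧ binaryDigitSum m = k + 1} := by
    rintro n ⟨hn, rfl⟩
    exact ⟨by omega, binaryDigitSum_succ n⟩
  calc _ ≤ {m : ℕ | m < 2 ^ (r + 1) ∧ binaryDigitSum m = k + 1}.ncard :=
        Set.ncard_le_ncard_of_injOn _ hmaps (add_left_injective 1).injOn
          ((Set.finite_Iio _).subset fun _ hm => hm.1)
    _ ≤ _ := ncard_binaryDigitSum_eq_le _ _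

/-- For `k ≥ 1`, `N ≥ 1` and `r = ⌊log₂ N⌋`,
`#{n < N : d(α(n)) = k} ≤ C(r+1, k+1)`. -/
theorem card_dAlpha_le (N k : ℕ) (hk : 1 ≤ k) (hN : 1 ≤ N)
    (r : ℕ) (hr : r = Nat.log 2 N) :
    {n : ℕ | n < N ∧ binaryDigitSum (alphaFn n) = k}.ncard ≤ (r + 1).choose (k + 1) :=
  card_dAlpha_le_general N k r hr
end
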